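/- arXiv:2509.08957 — 2 statements merged into one kernel-verified Lean document; each statement's English description precedes it below -/
import Mathlib

section
/- Let h > 0, ψ₀ > 0, M > 0, and let ψ : (0, M] → [0, ψ₀] be continuous. Suppose y is a solution of y'(r) = (y(r)² − ψ(r))/h on (r₀, M] with y(M) = 0, and suppose y(r₀) < 0 for some r₀ < M. Then a contradiction arises: hence any such solution satisfies y(r) ≥ 0 on its interval of existence in (0, M]. -/
/-!
If `y(r) < 0` for some `r`, then from `r` on `y` satisfies the differential inequality
`y' ≤ y² / h`, so it stays below the explicit negative solution of `z' = 2 z² / h` starting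
at `y(r)`; in particular `y(M) < 0`, contradicting `y(M) = 0`.
-/

open Set Filter

/-- Solves `z' = 2 z² / h`, `z(a) = c`; the factor `2` makes it a strict upper fence for
solutions of `y' ≤ y² / h`. -/
noncomputable def riccatiBarrier (h c a r : ℝ) : ℝ := (c⁻¹ - 2 * (r - a) / h)⁻¹

section RiccatiBarrier

variable {h c a r : ℝ}

@[simp]
theorem riccatiBarrier_self : riccatiBarrier h c a a = c := by
  simp [riccatiBarrier]

theorem riccatiBarrier_denom_neg (hh : 0 < h) (hc : c < 0) (hr : a ≤ r) :
    c⁻¹ - 2 * (r - a) / h < 0 := by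
  have : 0 ≤ 2 * (r - a) / h := by have := sub_nonneg.2 hr; positivity
  linarith [inv_lt_zero.2 hc]

theorem riccatiBarrier_neg (hh : 0 < h) (hc : c < 0) (hr : a ≤ r) :
    riccatiBarrier h c a r < 0 :=
  inv_lt_zero.2 (riccatiBarrier_denom_neg hh hc hr)

theorem hasDerivAt_riccatiBarrier (hh : 0 < h) (hc : c < 0) (hr : a ≤ r) :
    HasDerivAt (riccatiBarrier h c a) (2 * riccatiBarrier h c a r ^ 2 / h) r := by
  have hden := (riccatiBarrier_denom_neg hh hc hr).ne
  have hlin : HasDerivAt (fun s => c⁻¹ - 2 * (s - a) / h) (-(2 * 1 / h)) r :=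
    ((((hasDerivAt_id r).sub_const a).const_mul 2).div_const h).const_sub _
  refine (hlin.inv hden).congr_deriv ?_
  simp only [riccatiBarrier, inv_pow]
  field_simp

end RiccatiBarrier

theorem image_neg_of_deriv_right_le_sq_div {f f' : ℝ → ℝ} {a b h : ℝ} (hh : 0 < h)
    (hf : ContinuousOn f (Icc a b))
    (hf' : ∀ x ∈ Ico a b, HasDerivWithinAt f (f' x) (Ici x) x)
    (bound : ∀ x ∈ Ico a b, f' x ≤ f x ^ 2 / h) (ha : f a < 0) :
    ∀ ⦃x⦄, x ∈ Icc a b → f x < 0 := by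
  set z := riccatiBarrier h (f a) a
  have hz_neg : ∀ x ∈ Icc a b, z x < 0 := fun x hx => riccatiBarrier_neg hh ha hx.1
  have hz' : ∀ x ∈ Icc a b, HasDerivAt z (2 * z x ^ 2 / h) x :=
    fun x hx => hasDerivAt_riccatiBarrier hh ha hx.1
  have hf_le_z : ∀ ⦃x⦄, x ∈ Icc a b → f x ≤ z x := by
    refine image_le_of_deriv_right_lt_deriv_boundary' hf hf' riccatiBarrier_self.ge
      (fun x hx => (hz' x hx).continuousAt.continuousWithinAt)
      (fun x hx => (hz' x (Ico_subset_Icc_self hx)).hasDerivWithinAt) fun x hx hfx => ?_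
    have hzx : 0 < z x ^ 2 := sq_pos_of_neg (hz_neg x (Ico_subset_Icc_self hx))
    calc f' x ≤ f x ^ 2 / h := bound x hx
      _ = z x ^ 2 / h := by rw [hfx]
      _ < 2 * z x ^ 2 / h := by gcongr; linarith
  exact fun x hx => (hf_le_z hx).trans_lt (hz_neg x hx)

theorem riccati_nonneg_general (h ψ₀ M r₀ : ℝ) (hh : 0 < h)
    (hr₀ : 0 < r₀)
    (ψ : ℝ → ℝ)
    (hψb : ∀ r ∈ Set.Ioc (0 : ℝ) M, ψ r ∈ Set.Icc 0 ψ₀)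
    (y : ℝ → ℝ)
    (hy : ∀ r ∈ Set.Icc r₀ M,
      HasDerivWithinAt y ((y r ^ 2 - ψ r) / h) (Set.Icc r₀ M) r)
    (hyM : y M = 0) :
    ∀ r ∈ Set.Icc r₀ M, 0 ≤ y r := by
  intro r hr
  by_contra! hyr
  have hsub : Icc r M ⊆ Icc r₀ M := Icc_subset_Icc_left hr.1
  have hy_right : ∀ x ∈ Ico r M, HasDerivWithinAt y ((y x ^ 2 - ψ x) / h) (Ici x) x :=
    fun x hx => (hy x (hsub (Ico_subset_Icc_self hx))).mono_of_mem_nhdsWithin <|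
      mem_of_superset (Icc_mem_nhdsGE hx.2) (Icc_subset_Icc_left (hr.1.trans hx.1))
  have hψ_nonneg : ∀ x ∈ Ico r M, 0 ≤ ψ x := fun x hx =>
    (hψb x ⟨hr₀.trans_le (hr.1.trans hx.1), hx.2.le⟩).1
  have hyM_neg : y M < 0 :=
    image_neg_of_deriv_right_le_sq_div hh
      (fun x hx => (hy x (hsub hx)).continuousWithinAt.mono hsub) hy_right
      (fun x hx => by gcongr; linarith [hψ_nonneg x hx]) hyr ⟨hr.2, le_rfl⟩
  exact hyM_neg.ne hyM

/-- **Nonnegativity for the Riccati equation**: a solution of `y' = (y² − ψ)/h`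
on `[r₀, M] ⊆ (0, M]` with `y(M) = 0`, where `0 ≤ ψ ≤ ψ₀`, satisfies `y ≥ 0`
(a value `y(r₀) < 0` would lead to a contradiction). -/
theorem riccati_nonneg (h ψ₀ M r₀ : ℝ) (hh : 0 < h) (hψ₀ : 0 < ψ₀) (hM : 0 < M)
    (hr₀ : 0 < r₀) (hr₀M : r₀ < M)
    (ψ : ℝ → ℝ) (hψc : ContinuousOn ψ (Set.Ioc 0 M))
    (hψb : ∀ r ∈ Set.Ioc (0 : ℝ) M, ψ r ∈ Set.Icc 0 ψ₀)
    (y : ℝ → ℝ)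
    (hy : ∀ r ∈ Set.Icc r₀ M,
      HasDerivWithinAt y ((y r ^ 2 - ψ r) / h) (Set.Icc r₀ M) r)
    (hyM : y M = 0) :
    ∀ r ∈ Set.Icc r₀ M, 0 ≤ y r :=
  riccati_nonneg_general h ψ₀ M r₀ hh hr₀ ψ hψb y hy hyM
end

section
/- Let f : I → ℝ be continuous and of locally bounded variation on an open interval I. Then, as measures on any bounded Borel subset of I, d(e^f) = e^f df. -/
/-! For `φ` with continuous derivative `φ'`, the mean value and intermediate value theorems give
`φ (f s') - φ (f s) = φ' (f y) * (f s' - f s)` for some `y ∈ [s, s']`, and `f s' - f s` is the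
`df`-mass of `(s, s']`. Hence `∫_{(s, s']} φ' ∘ f d(df)` differs from `φ (f s') - φ (f s)` by at
most the oscillation of `φ' ∘ f` on `[s, s']` times the total mass `(μp + μm) (s, s']`. Summing
over a fine partition of `[c, d]`, uniform continuity of `φ' ∘ f` makes the error arbitrarily
small: `d(φ ∘ f) = φ' ∘ f df` on every `(c, d] ⊆ (a, b]`. For `φ = exp` the density `e^f` is
positive, so both sides are differences of finite measures, and measures agreeing on all
subintervals of `(a, b]` agree on its Borel subsets. -/

open MeasureTheory

/-- Data representing the Lebesgue–Stieltjes signed measure `df` of a real function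
of bounded variation on `(a, b]`: two finite nonnegative measures whose difference
has the increments of `f`. -/
structure RealStieltjesMeasureData (f : ℝ → ℝ) (a b : ℝ) where
  μp : Measure ℝ
  μm : Measure ℝ
  finp : IsFiniteMeasure μp
  finm : IsFiniteMeasure μm
  spec : ∀ c d : ℝ, a ≤ c → c ≤ d → d ≤ b →
    (μp (Set.Ioc c d)).toReal - (μm (Set.Ioc c d)).toReal = f d - f c

open Set

theorem eq_of_forall_abs_sub_le_mul_sub {F m : ℝ → ℝ} {c d : ℝ} (hcd : c ≤ d)
    (h : ∀ ε > 0, ∃ η > 0, ∀ s s', c ≤ s → s ≤ s' → s' ≤ d → s' - s ≤ η →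
      |F s' - F s| ≤ ε * (m s' - m s)) :
    F d = F c := by
  suffices key : ∀ ε > 0, |F d - F c| ≤ ε * (m d - m c) by
    refine eq_of_forall_dist_le fun ε hε => ?_
    have hK : 0 < |m d - m c| + 1 := by positivity
    calc dist (F d) (F c) = |F d - F c| := Real.dist_eq _ _
      _ ≤ ε / (|m d - m c| + 1) * (m d - m c) := key _ (div_pos hε hK)
      _ ≤ ε / (|m d - m c| + 1) * (|m d - m c| + 1) := by
          gcongr; linarith [le_abs_self (m d - m c)]
      _ = ε := div_mul_cancel₀ ε hK.ne'
  intro ε hε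
  obtain ⟨η, hη, hF⟩ := h ε hε
  set n : ℕ := ⌊(d - c) / η⌋₊ + 1
  have hn : (0 : ℝ) < n := by positivity
  set t : ℕ → ℝ := fun i => c + i * ((d - c) / n)
  have ht_step : ∀ i, t (i + 1) - t i = (d - c) / n := fun i => by simp only [t]; push_cast; ring
  have ht_mono : Monotone t := fun i j hij => by simp only [t]; gcongr
  have hmesh : (d - c) / n ≤ η := by
    rw [div_le_iff₀ hn, mul_comm, ← div_le_iff₀ hη]
    exact_mod_cast (Nat.lt_floor_add_one _).le
  have ht0 : t 0 = c := by simp [t]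
  have htn : t n = d := by simp only [t]; field_simp; ring
  have ht_le : ∀ i ≤ n, t i ≤ d := fun i hi => htn ▸ ht_mono hi
  calc |F d - F c| = |∑ i ∈ Finset.range n, (F (t (i + 1)) - F (t i))| := by
        rw [Finset.sum_range_sub (fun i => F (t i)), ht0, htn]
    _ ≤ ∑ i ∈ Finset.range n, ε * (m (t (i + 1)) - m (t i)) := by
        refine (Finset.abs_sum_le_sum_abs _ _).trans (Finset.sum_le_sum fun i hi => ?_)
        have hi : i + 1 ≤ n := Finset.mem_range.1 hi
        refine hF _ _ (ht0 ▸ ht_mono (Nat.zero_le i)) (ht_mono i.le_succ) (ht_le _ hi) ?_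
        rw [ht_step]; exact hmesh
    _ = ε * (m d - m c) := by
        rw [← Finset.mul_sum, Finset.sum_range_sub (fun i => m (t i)), ht0, htn]

theorem exists_mem_uIcc_sub_eq_deriv_mul {φ φ' : ℝ → ℝ} (hφ : ∀ x, HasDerivAt φ (φ' x) x)
    (u v : ℝ) :
    ∃ ξ ∈ uIcc u v, φ v - φ u = φ' ξ * (v - u) := by
  wlog huv : u < v generalizing u v
  · rcases (not_lt.1 huv).eq_or_lt with rfl | hvu
    · exact ⟨_, left_mem_uIcc, by ring⟩
    · obtain ⟨ξ, hξ, h⟩ := this v u hvu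
      exact ⟨ξ, uIcc_comm u v ▸ hξ, by linarith⟩
  obtain ⟨ξ, hξ, h⟩ := exists_hasDerivAt_eq_slope φ φ' huv
    (fun x _ => (hφ x).continuousAt.continuousWithinAt) fun x _ => hφ x
  refine ⟨ξ, Ioo_subset_Icc_self.trans Icc_subset_uIcc hξ, ?_⟩
  rw [h, div_mul_cancel₀ _ (sub_ne_zero.2 huv.ne')]

theorem exists_mem_Icc_sub_eq_deriv_comp_mul {φ φ' f : ℝ → ℝ} (hφ : ∀ x, HasDerivAt φ (φ' x) x)
    {s s' : ℝ} (hss' : s ≤ s') (hf : ContinuousOn f (Icc s s')) :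
    ∃ y ∈ Icc s s', φ (f s') - φ (f s) = φ' (f y) * (f s' - f s) := by
  obtain ⟨ξ, hξ, h⟩ := exists_mem_uIcc_sub_eq_deriv_mul hφ (f s) (f s')
  rw [← uIcc_of_le hss'] at hf ⊢
  obtain ⟨y, hy, rfl⟩ := intermediate_value_uIcc hf hξ
  exact ⟨y, hy, h⟩

theorem abs_setIntegral_sub_mul_measureReal_le {α : Type*} [MeasurableSpace α] {μ : Measure α}
    {g : α → ℝ} {S : Set α} {y ε : ℝ} (hS : μ S ≠ ⊤) (hg : IntegrableOn g S μ)
    (hgy : ∀ x ∈ S, |g x - y| ≤ ε) :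
    |(∫ x in S, g x ∂μ) - y * μ.real S| ≤ ε * μ.real S := by
  rw [mul_comm y, ← smul_eq_mul, ← setIntegral_const, ← integral_sub hg (integrableOn_const hS),
    ← Real.norm_eq_abs]
  exact norm_setIntegral_le_of_norm_le_const hS.lt_top hgy

theorem measureReal_Ioc_sub_measureReal_Ioc {μ : Measure ℝ} [IsFiniteMeasure μ] {c s s' : ℝ}
    (hcs : c ≤ s) (hss' : s ≤ s') : μ.real (Ioc c s') - μ.real (Ioc c s) = μ.real (Ioc s s') := by
  rw [← Ioc_union_Ioc_eq_Ioc hcs hss', measureReal_union (Ioc_disjoint_Ioc_of_le le_rfl)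
    measurableSet_Ioc, add_sub_cancel_left]

attribute [instance] RealStieltjesMeasureData.finp RealStieltjesMeasureData.finm

namespace RealStieltjesMeasureData

variable {f : ℝ → ℝ} {a b : ℝ} (D : RealStieltjesMeasureData f a b)

theorem setIntegral_deriv_comp_sub {φ φ' : ℝ → ℝ} (hφ : ∀ x, HasDerivAt φ (φ' x) x)
    (hφ' : Continuous φ') (hf : ContinuousOn f (Icc a b)) {c d : ℝ} (hac : a ≤ c) (hcd : c ≤ d)
    (hdb : d ≤ b) :
    (∫ x in Ioc c d, φ' (f x) ∂D.μp) - ∫ x in Ioc c d, φ' (f x) ∂D.μm = φ (f d) - φ (f c) := by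
  set g := fun x => φ' (f x)
  have hg : ContinuousOn g (Icc a b) := hφ'.comp_continuousOn hf
  have hg_int : ∀ (μ : Measure ℝ) [IsFiniteMeasure μ] {s s'}, s ∈ Icc a b → s' ∈ Icc a b →
      IntervalIntegrable g μ s s' := fun μ _ _ _ hs hs' =>
    (hg.mono (uIcc_subset_Icc hs hs')).intervalIntegrable
  set F : ℝ → ℝ := fun x => (∫ y in c..x, g y ∂D.μp) - (∫ y in c..x, g y ∂D.μm) - φ (f x)
  suffices F d = F c by
    simp only [F, intervalIntegral.integral_same, intervalIntegral.integral_of_le hcd] at this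
    linarith
  refine eq_of_forall_abs_sub_le_mul_sub (m := fun x => (D.μp + D.μm).real (Ioc c x)) hcd
    fun ε hε => ?_
  obtain ⟨η, hη, hgη⟩ :=
    Metric.uniformContinuousOn_iff_le.1 (isCompact_Icc.uniformContinuousOn_of_continuous hg) ε hε
  refine ⟨η, hη, fun s s' hcs hss' hs'd hs's => ?_⟩
  have hs : s ∈ Icc a b := ⟨hac.trans hcs, hss'.trans (hs'd.trans hdb)⟩
  have hs' : s' ∈ Icc a b := ⟨hs.1.trans hss', hs'd.trans hdb⟩
  have hss'ab : Icc s s' ⊆ Icc a b := Icc_subset_Icc hs.1 hs'.2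
  obtain ⟨y, hy, hφy⟩ := exists_mem_Icc_sub_eq_deriv_comp_mul hφ hss' (hf.mono hss'ab)
  have hgy : ∀ x ∈ Ioc s s', |g x - g y| ≤ ε := fun x hx => by
    rw [← Real.dist_eq]
    refine hgη x (hss'ab (Ioc_subset_Icc_self hx)) y (hss'ab hy) ?_
    rw [Real.dist_eq, abs_le]
    constructor <;> linarith [hx.1, hx.2, hy.1, hy.2]
  have hc : c ∈ Icc a b := ⟨hac, hcd.trans hdb⟩
  have hF : F s' - F s = ((∫ x in Ioc s s', g x ∂D.μp) - g y * D.μp.real (Ioc s s'))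
      - ((∫ x in Ioc s s', g x ∂D.μm) - g y * D.μm.real (Ioc s s')) := by
    have hspec := D.spec s s' hs.1 hss' hs'.2
    simp only [F, ← measureReal_def] at hspec ⊢
    rw [← intervalIntegral.integral_of_le hss', ← intervalIntegral.integral_of_le hss',
      ← intervalIntegral.integral_interval_sub_left (hg_int _ hc hs') (hg_int _ hc hs),
      ← intervalIntegral.integral_interval_sub_left (hg_int _ hc hs') (hg_int _ hc hs)]
    linear_combination -hφy + φ' (f y) * hspec
  have hm : (D.μp + D.μm).real (Ioc c s') - (D.μp + D.μm).real (Ioc c s)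
      = D.μp.real (Ioc s s') + D.μm.real (Ioc s s') := by
    rw [measureReal_Ioc_sub_measureReal_Ioc hcs hss', measureReal_add_apply]
  rw [hF, hm]
  calc _ ≤ |(∫ x in Ioc s s', g x ∂D.μp) - g y * D.μp.real (Ioc s s')|
        + |(∫ x in Ioc s s', g x ∂D.μm) - g y * D.μm.real (Ioc s s')| := abs_sub _ _
    _ ≤ ε * D.μp.real (Ioc s s') + ε * D.μm.real (Ioc s s') := by
        gcongr <;> exact abs_setIntegral_sub_mul_measureReal_le (measure_ne_top _ _)
          (hg_int _ hs hs').1 hgy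
    _ = _ := by ring

end RealStieltjesMeasureData

theorem measureReal_restrict_withDensity_ofReal {X : Type*} [MeasurableSpace X] {μ : Measure X}
    {g : X → ℝ} {s S : Set X} (hS : MeasurableSet S) (hSs : S ⊆ s) (hg : IntegrableOn g s μ)
    (hg0 : ∀ x ∈ s, 0 ≤ g x) :
    ((μ.restrict s).withDensity fun x => ENNReal.ofReal (g x)).real S = ∫ x in S, g x ∂μ := by
  have hg0S : 0 ≤ᵐ[μ.restrict S] g :=
    (ae_restrict_iff' hS).2 (Filter.Eventually.of_forall fun x hx => hg0 x (hSs hx))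
  rw [measureReal_def, withDensity_apply _ hS, Measure.restrict_restrict hS,
    inter_eq_self_of_subset_left hSs, ← ofReal_integral_eq_lintegral_ofReal (hg.mono_set hSs) hg0S,
    ENNReal.toReal_ofReal (integral_nonneg_of_ae hg0S)]

theorem measureReal_sub_eq_of_forall_Ioc {a b : ℝ} {α β γ δ : Measure ℝ} [IsFiniteMeasure α]
    [IsFiniteMeasure β] [IsFiniteMeasure γ] [IsFiniteMeasure δ]
    (h : ∀ c d, a ≤ c → c ≤ d → d ≤ b →
      α.real (Ioc c d) - β.real (Ioc c d) = γ.real (Ioc c d) - δ.real (Ioc c d))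
    {E : Set ℝ} (hE : MeasurableSet E) (hEsub : E ⊆ Ioc a b) :
    α.real E - β.real E = γ.real E - δ.real E := by
  have hsum : ∀ S, (α + δ).real S = (γ + β).real S ↔
      α.real S - β.real S = γ.real S - δ.real S := fun S => by
    rw [measureReal_add_apply, measureReal_add_apply]
    constructor <;> intro <;> linarith
  have hIoc : ∀ c d,
      (α + δ).restrict (Ioc a b) (Ioc c d) = (γ + β).restrict (Ioc a b) (Ioc c d) := by
    intro c d
    rw [Measure.restrict_apply measurableSet_Ioc, Measure.restrict_apply measurableSet_Ioc,
      Ioc_inter_Ioc, ← measureReal_eq_measureReal_iff, hsum]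
    rcases le_or_gt (c ⊔ a) (d ⊓ b) with hle | hlt
    · exact h _ _ le_sup_right hle inf_le_right
    · simp [Ioc_eq_empty_of_le hlt.le]
  have hrestrict : (α + δ).restrict (Ioc a b) = (γ + β).restrict (Ioc a b) :=
    Measure.ext_of_Ioc_finite _ _
      (by simpa only [Measure.restrict_apply_univ, Measure.restrict_apply_self] using hIoc a b)
      fun c d _ => hIoc c d
  have hE' := congrArg (fun μ : Measure ℝ => μ.real E) hrestrict
  simp only [measureReal_restrict_apply hE, inter_eq_self_of_subset_left hEsub] at hE'
  exact (hsum E).1 hE'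

theorem measureReal_sub_eq_setIntegral_sub_of_forall_Ioc {a b : ℝ} {α β μ ν : Measure ℝ}
    [IsFiniteMeasure α] [IsFiniteMeasure β] {g : ℝ → ℝ} (hgμ : IntegrableOn g (Ioc a b) μ)
    (hgν : IntegrableOn g (Ioc a b) ν) (hg0 : ∀ x ∈ Ioc a b, 0 ≤ g x)
    (h : ∀ c d, a ≤ c → c ≤ d → d ≤ b →
      α.real (Ioc c d) - β.real (Ioc c d) = (∫ x in Ioc c d, g x ∂μ) - ∫ x in Ioc c d, g x ∂ν)
    {E : Set ℝ} (hE : MeasurableSet E) (hEsub : E ⊆ Ioc a b) :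
    α.real E - β.real E = (∫ x in E, g x ∂μ) - ∫ x in E, g x ∂ν := by
  have := isFiniteMeasure_withDensity_ofReal hgμ.2
  have := isFiniteMeasure_withDensity_ofReal hgν.2
  have hρ := fun κ (hκ : IntegrableOn g (Ioc a b) κ) S (hS : MeasurableSet S) hSs =>
    measureReal_restrict_withDensity_ofReal hS hSs hκ hg0
  rw [← hρ μ hgμ E hE hEsub, ← hρ ν hgν E hE hEsub]
  refine measureReal_sub_eq_of_forall_Ioc (fun c d hac hcd hdb => ?_) hE hEsub
  have hsub := Ioc_subset_Ioc hac hdb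
  rw [hρ μ hgμ _ measurableSet_Ioc hsub, hρ ν hgν _ measurableSet_Ioc hsub]
  exact h c d hac hcd hdb

theorem bv_chain_rule_exp_general (a b : ℝ) (f : ℝ → ℝ)
    (hf_cont : ContinuousOn f (Set.Icc a b))
    (Df : RealStieltjesMeasureData f a b)
    (De : RealStieltjesMeasureData (fun x => Real.exp (f x)) a b)
    (E : Set ℝ) (hE : MeasurableSet E) (hEsub : E ⊆ Set.Ioc a b) :
    (De.μp E).toReal - (De.μm E).toReal
      = (∫ x in E, Real.exp (f x) ∂Df.μp) - ∫ x in E, Real.exp (f x) ∂Df.μm := by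
  have hint : ∀ (μ : Measure ℝ) [IsFiniteMeasure μ],
      IntegrableOn (fun x => Real.exp (f x)) (Ioc a b) μ := fun μ _ =>
    (Real.continuous_exp.comp_continuousOn hf_cont).integrableOn_Icc.mono_set Ioc_subset_Icc_self
  refine measureReal_sub_eq_setIntegral_sub_of_forall_Ioc (hint _) (hint _)
    (fun x _ => (Real.exp_pos _).le) (fun c d hac hcd hdb => ?_) hE hEsub
  rw [Df.setIntegral_deriv_comp_sub Real.hasDerivAt_exp Real.continuous_exp hf_cont hac hcd hdb]
  exact De.spec c d hac hcd hdb

/-- **Chain rule for continuous functions of bounded variation**: as measures on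
any bounded Borel subset of the interval, `d(e^f) = e^f df`. -/
theorem bv_chain_rule_exp (a b : ℝ) (hab : a < b) (f : ℝ → ℝ)
    (hf_cont : ContinuousOn f (Set.Icc a b))
    (hf_bv : BoundedVariationOn f (Set.Icc a b))
    (Df : RealStieltjesMeasureData f a b)
    (De : RealStieltjesMeasureData (fun x => Real.exp (f x)) a b)
    (E : Set ℝ) (hE : MeasurableSet E) (hEsub : E ⊆ Set.Ioc a b) :
    (De.μp E).toReal - (De.μm E).toReal
      = (∫ x in E, Real.exp (f x) ∂Df.μp) - ∫ x in E, Real.exp (f x) ∂Df.μm :=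
  bv_chain_rule_exp_general a b f hf_cont Df De E hE hEsub
end
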